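/- arXiv:2102.05780 — 3 statements merged into one kernel-verified Lean document; each statement's English description precedes it below -/
import Mathlib

section
/- Let H be a complex Hilbert space with dim H ≥ 3 and let [v₁], [v₂] ∈ P(H) be two different lines. Then there exist an orthonormal system {e₁, e₂} ⊆ H and real numbers c ≥ d > 0 with c² + d² = 1 such that [v₁] = [c·e₁ + i·d·e₂] and [v₂] = [c·e₁ − i·d·e₂]. -/
/-!
Pick unit representatives `u` of `x` and `w` of `y`, rotating the phase of `w` so that
`⟪u, w⟫ ≥ 0`. Then `u + w ⊥ u - w`, the parallelogram law gives
`‖u + w‖² + ‖u - w‖² = 4`, and `⟪u, w⟫ ≥ 0` gives `‖u - w‖ ≤ ‖u + w‖`; so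
`c = ‖u + w‖ / 2`, `d = ‖u - w‖ / 2`, `e₁ = (u + w) / ‖u + w‖`, `e₂ = -i (u - w) / ‖u - w‖`
satisfy `u = c e₁ + i d e₂` and `w = c e₁ - i d e₂`.
-/

noncomputable section

variable {H : Type*} [NormedAddCommGroup H] [InnerProductSpace ℂ H]

/-- The quantum angle (Fubini–Study distance) between two lines,
computed from unit representatives. -/
def qAngle (x y : Projectivization ℂ H) : ℝ :=
  Real.arccos (‖(inner ℂ x.rep y.rep : ℂ)‖ / (‖x.rep‖ * ‖y.rep‖))

/-- The α-set of a set of lines. -/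
def alphaSet (α : ℝ) (S : Set (Projectivization ℂ H)) : Set (Projectivization ℂ H) :=
  {x | ∀ y ∈ S, qAngle x y = α}

/-- φ is a Wigner symmetry: it is induced by a unitary or an antiunitary operator. -/
def IsWignerSymmetry (φ : Projectivization ℂ H → Projectivization ℂ H) : Prop :=
  ∃ U : H → H,
    ((∃ e : H ≃ₗᵢ[ℂ] H, U = ⇑e) ∨ (∃ e : H ≃ₗᵢ⋆[ℂ] H, U = ⇑e)) ∧
    ∀ (v : H) (hv : v ≠ 0),
      (φ (Projectivization.mk ℂ v hv)).submodule = Submodule.span ℂ {U v}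

/-- The circle determined by an orthonormal pair and coefficients c, d. -/
def circleSet (e₁ e₂ : H) (c d : ℝ) : Set (Projectivization ℂ H) :=
  {x | ∃ lam : ℂ, ‖lam‖ = 1 ∧
    x.submodule = Submodule.span ℂ {(c : ℂ) • e₁ + (lam * d) • e₂}}

/-- A circle in the projective space. -/
def IsCircle (T : Set (Projectivization ℂ H)) : Prop :=
  ∃ (e₁ e₂ : H) (c d : ℝ), ‖e₁‖ = 1 ∧ ‖e₂‖ = 1 ∧ (inner ℂ e₁ e₂ : ℂ) = 0 ∧
    0 < c ∧ 0 < d ∧ c ^ 2 + d ^ 2 = 1 ∧ T = circleSet e₁ e₂ c d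

/-- A highly-α-symmetric set. -/
def IsHighlyAlphaSymmetric (α : ℝ) (T : Set (Projectivization ℂ H)) : Prop :=
  T.Infinite ∧ (alphaSet α T).Infinite ∧
    ∀ S : Set (Projectivization ℂ H), S ⊆ T → S.ncard = 3 →
      alphaSet α (alphaSet α S) = T

open scoped InnerProductSpace ComplexOrder LinearAlgebra.Projectivization

theorem Complex.exists_norm_eq_one_mul_nonneg (a : ℂ) : ∃ z : ℂ, ‖z‖ = 1 ∧ 0 ≤ z * a := by
  refine ⟨Complex.exp (-a.arg * Complex.I), by exact_mod_cast Complex.norm_exp_ofReal_mul_I _, ?_⟩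
  have hphase : Complex.exp (-a.arg * Complex.I) * Complex.exp (a.arg * Complex.I) = 1 := by
    rw [← Complex.exp_add, neg_mul, neg_add_cancel, Complex.exp_zero]
  calc (0 : ℂ) ≤ (‖a‖ : ℂ) := by exact_mod_cast norm_nonneg a
    _ = Complex.exp (-a.arg * Complex.I) * (‖a‖ * Complex.exp (a.arg * Complex.I)) := by
      rw [mul_left_comm, hphase, mul_one]
    _ = Complex.exp (-a.arg * Complex.I) * a := by rw [Complex.norm_mul_exp_arg_mul_I]

theorem Projectivization.exists_norm_eq_one_submodule_eq (x : ℙ ℂ H) :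
    ∃ u : H, ‖u‖ = 1 ∧ x.submodule = ℂ ∙ u := by
  have hrep := x.rep_nonzero
  refine ⟨(‖x.rep‖⁻¹ : ℂ) • x.rep, norm_smul_inv_norm hrep, ?_⟩
  rw [x.submodule_eq, Submodule.span_singleton_smul_eq]
  simpa using hrep

theorem Projectivization.exists_unit_reps_inner_nonneg {x y : ℙ ℂ H} (hxy : x ≠ y) :
    ∃ u w : H, ‖u‖ = 1 ∧ ‖w‖ = 1 ∧ u ≠ w ∧ 0 ≤ ⟪u, w⟫_ℂ ∧
      x.submodule = ℂ ∙ u ∧ y.submodule = ℂ ∙ w := by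
  obtain ⟨u, hu, hxu⟩ := x.exists_norm_eq_one_submodule_eq
  obtain ⟨w, hw, hyw⟩ := y.exists_norm_eq_one_submodule_eq
  obtain ⟨z, hz, hnonneg⟩ := Complex.exists_norm_eq_one_mul_nonneg ⟪u, w⟫_ℂ
  have hyzw : y.submodule = ℂ ∙ (z • w) := by
    rw [hyw, Submodule.span_singleton_smul_eq]
    exact isUnit_iff_ne_zero.2 (by rintro rfl; simp at hz)
  refine ⟨u, z • w, hu, by rw [norm_smul, hz, hw, one_mul], ?_, ?_, hxu, hyzw⟩
  · rintro rfl
    exact hxy (Projectivization.submodule_injective (hxu.trans hyzw.symm))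
  · rwa [inner_smul_right]

theorem exists_orthonormal_pair_of_inner_nonneg {u w : H} (hu : ‖u‖ = 1) (hw : ‖w‖ = 1)
    (huw : u ≠ w) (hinner : 0 ≤ ⟪u, w⟫_ℂ) :
    ∃ (e₁ e₂ : H) (c d : ℝ), ‖e₁‖ = 1 ∧ ‖e₂‖ = 1 ∧ ⟪e₁, e₂⟫_ℂ = 0 ∧
      d ≤ c ∧ 0 < d ∧ c ^ 2 + d ^ 2 = 1 ∧
      (c : ℂ) • e₁ + (Complex.I * d) • e₂ = u ∧ (c : ℂ) • e₁ - (Complex.I * d) • e₂ = w := by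
  have hwu : ⟪w, u⟫_ℂ = ⟪u, w⟫_ℂ := by
    rw [← inner_conj_symm, Complex.conj_eq_iff_im]
    exact (Complex.nonneg_iff.1 hinner).2.symm
  have hre : 0 ≤ RCLike.re ⟪u, w⟫_ℂ := (Complex.nonneg_iff.1 hinner).1
  have horth : ⟪u + w, u - w⟫_ℂ = 0 := by
    rw [inner_add_left, inner_sub_right, inner_sub_right, hwu, inner_self_eq_norm_sq_to_K,
      inner_self_eq_norm_sq_to_K, hu, hw]
    ring
  have hpar : ‖u + w‖ ^ 2 + ‖u - w‖ ^ 2 = 4 := by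
    rw [@norm_add_sq ℂ, @norm_sub_sq ℂ, hu, hw]
    ring
  have hle : ‖u - w‖ ≤ ‖u + w‖ := by
    rw [← sq_le_sq₀ (norm_nonneg _) (norm_nonneg _), @norm_add_sq ℂ, @norm_sub_sq ℂ]
    linarith
  have hq : u - w ≠ 0 := sub_ne_zero.2 huw
  have hq_pos : 0 < ‖u - w‖ := norm_pos_iff.2 hq
  have hp : u + w ≠ 0 := norm_pos_iff.1 (hq_pos.trans_le hle)
  have hp_half : ((‖u + w‖ / 2 : ℝ) : ℂ) • (‖u + w‖⁻¹ : ℂ) • (u + w) = (2⁻¹ : ℂ) • (u + w) := by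
    have : (‖u + w‖ : ℂ) ≠ 0 := by exact_mod_cast norm_ne_zero_iff.2 hp
    rw [smul_smul]
    congr 1
    push_cast
    field_simp
  have hq_half : (Complex.I * ((‖u - w‖ / 2 : ℝ) : ℂ)) • -Complex.I • (‖u - w‖⁻¹ : ℂ) • (u - w) =
      (2⁻¹ : ℂ) • (u - w) := by
    have : (‖u - w‖ : ℂ) ≠ 0 := by exact_mod_cast hq_pos.ne'
    rw [smul_smul, smul_smul]
    congr 1
    push_cast
    field_simp
    rw [Complex.I_sq, neg_neg]
  refine ⟨(‖u + w‖⁻¹ : ℂ) • (u + w), -Complex.I • (‖u - w‖⁻¹ : ℂ) • (u - w),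
    ‖u + w‖ / 2, ‖u - w‖ / 2, norm_smul_inv_norm hp, ?_, ?_, by linarith, by linarith,
    by linarith, ?_, ?_⟩
  · rw [norm_smul, norm_neg, Complex.norm_I, one_mul]
    exact norm_smul_inv_norm hq
  · simp only [inner_smul_left, inner_smul_right, horth, mul_zero]
  · rw [hp_half, hq_half]
    module
  · rw [hp_half, hq_half]
    module

theorem pair_normal_form_general
    (x y : Projectivization ℂ H) (hxy : x ≠ y) :
    ∃ (e₁ e₂ : H) (c d : ℝ), ‖e₁‖ = 1 ∧ ‖e₂‖ = 1 ∧ (inner ℂ e₁ e₂ : ℂ) = 0 ∧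
      d ≤ c ∧ 0 < d ∧ c ^ 2 + d ^ 2 = 1 ∧
      x.submodule = Submodule.span ℂ {(c : ℂ) • e₁ + (Complex.I * d) • e₂} ∧
      y.submodule = Submodule.span ℂ {(c : ℂ) • e₁ - (Complex.I * d) • e₂} := by
  obtain ⟨u, w, hu, hw, huw, hinner, hxu, hyw⟩ :=
    Projectivization.exists_unit_reps_inner_nonneg hxy
  obtain ⟨e₁, e₂, c, d, he₁, he₂, horth, hdc, hd, hcd, hu_eq, hw_eq⟩ :=
    exists_orthonormal_pair_of_inner_nonneg hu hw huw hinner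
  exact ⟨e₁, e₂, c, d, he₁, he₂, horth, hdc, hd, hcd, by rw [hxu, hu_eq], by rw [hyw, hw_eq]⟩

/-- normal form of a pair of distinct lines. -/
theorem pair_normal_form
    (hdim : 3 ≤ Module.rank ℂ H)
    (x y : Projectivization ℂ H) (hxy : x ≠ y) :
    ∃ (e₁ e₂ : H) (c d : ℝ), ‖e₁‖ = 1 ∧ ‖e₂‖ = 1 ∧ (inner ℂ e₁ e₂ : ℂ) = 0 ∧
      d ≤ c ∧ 0 < d ∧ c ^ 2 + d ^ 2 = 1 ∧
      x.submodule = Submodule.span ℂ {(c : ℂ) • e₁ + (Complex.I * d) • e₂} ∧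
      y.submodule = Submodule.span ℂ {(c : ℂ) • e₁ - (Complex.I * d) • e₂} :=
  pair_normal_form_general x y hxy
end
end

section
/- Let H be a complex Hilbert space with dim H ≥ 3, fix π/4 < α < π/2 and set a := cos α. Let c ≥ d > 0 with c² + d² = 1, let λ₁, λ₂, λ₃ be pairwise different complex numbers of modulus 1, let {e₁, e₂} ⊆ H be an orthonormal system, and set S₀ := {[c·e₁ + λ_j·d·e₂] : j = 1, 2, 3}. Then: (i) if a > d, then S₀^⟨α⟩ = {[(a/c)·e₁ + h] : h ∈ H, ‖h‖ = √(1 − a²/c²), h ⊥ e₁, h ⊥ e₂}; (ii) if a ≤ d, then S₀^⟨α⟩ is the disjoint union of {[(a/c)·e₁ + h] : h ∈ H, ‖h‖ = √(1 − a²/c²), h ⊥ e₁, h ⊥ e₂} and {[(a/d)·e₂ + h] : h ∈ H, ‖h‖ = √(1 − a²/d²), h ⊥ e₁, h ⊥ e₂}. -/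
noncomputable section

variable {H : Type*} [NormedAddCommGroup H] [InnerProductSpace ℂ H]

/-! Write `v` for a representative of a line. The angle condition with `[c e₁ + λ d e₂]` reads
`|c ⟪e₁, v⟫ + λ̄ d ⟪e₂, v⟫| = a ‖v‖`. For three distinct unimodular `λ` this forces `⟪e₁, v⟫ = 0`
or `⟪e₂, v⟫ = 0`, since otherwise a quadratic equation in `λ` would have three roots. Hence the
α-set consists of the lines with `⟪e₂, v⟫ = 0, |⟪e₁, v⟫| = (a / c) ‖v‖` and those with
`⟪e₁, v⟫ = 0, |⟪e₂, v⟫| = (a / d) ‖v‖`; by Cauchy–Schwarz the latter exist only when `a ≤ d`.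
Normalising `⟪e₁, v⟫ = a / c` (resp. `⟪e₂, v⟫ = a / d`) gives the parametrisation of the statement,
which needs `a < c`: this follows from `α > π / 4` and `d ≤ c`. -/

open Real
open scoped InnerProductSpace LinearAlgebra.Projectivization ComplexConjugate

lemma Real.arccos_eq_iff_eq_cos {x y : ℝ} (hx₁ : -1 ≤ x) (hx₂ : x ≤ 1) (hy₀ : 0 ≤ y)
    (hy₁ : y ≤ π) : arccos x = y ↔ x = cos y :=
  ⟨fun h => h ▸ (cos_arccos hx₁ hx₂).symm, arccos_eq_of_eq_cos hy₀ hy₁⟩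

lemma Projectivization.submodule_eq_span_singleton_iff {K V : Type*} [DivisionRing K]
    [AddCommGroup V] [Module K V] {x : ℙ K V} {v : V} (hv : v ≠ 0) :
    x.submodule = K ∙ v ↔ x = mk K v hv := by
  rw [← submodule_mk v hv]
  exact submodule_injective.eq_iff

lemma quadratic_coeff_eq_zero_of_three_roots {K : Type*} [Field K] {p b q : K} {μ : Fin 3 → K}
    (hμ : Function.Injective μ) (hroot : ∀ j, p * μ j ^ 2 + b * μ j + q = 0) : p = 0 := by
  have hsum : ∀ i j, i ≠ j → p * (μ i + μ j) + b = 0 := fun i j hij => by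
    have h : (μ i - μ j) * (p * (μ i + μ j) + b) = 0 := by
      linear_combination hroot i - hroot j
    exact (mul_eq_zero.1 h).resolve_left (sub_ne_zero.2 (hμ.ne hij))
  have h : p * (μ 1 - μ 2) = 0 := by
    linear_combination hsum 0 1 (by decide) - hsum 0 2 (by decide)
  exact (mul_eq_zero.1 h).resolve_right (sub_ne_zero.2 (hμ.ne (by decide)))

lemma eq_zero_or_eq_zero_of_norm_add_mul_eq {z w : ℂ} {t : ℝ} {μ : Fin 3 → ℂ}
    (hμ : ∀ j, ‖μ j‖ = 1) (hinj : Function.Injective μ) (h : ∀ j, ‖z + μ j * w‖ = t) :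
    z = 0 ∨ w = 0 := by
  -- Multiplying `|z + μ w|² = t²` by `μ` and using `μ μ̄ = 1` gives a quadratic equation in `μ`.
  have hroot : ∀ j, (w * conj z) * μ j ^ 2 + (z * conj z + w * conj w - (t : ℂ) ^ 2) * μ j
      + z * conj w = 0 := fun j => by
    have hunit : μ j * conj (μ j) = 1 := by
      rw [Complex.mul_conj', hμ j]; norm_num
    have hsq : (z + μ j * w) * conj (z + μ j * w) = (t : ℂ) ^ 2 := by
      rw [Complex.mul_conj', h j]
    simp only [map_add, map_mul] at hsq
    linear_combination μ j * hsq - (z * conj w + μ j * w * conj w) * hunit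
  simpa [or_comm] using quadratic_coeff_eq_zero_of_three_roots hinj hroot

lemma qAngle_mk_mk {v w : H} (hv : v ≠ 0) (hw : w ≠ 0) :
    qAngle (Projectivization.mk ℂ v hv) (Projectivization.mk ℂ w hw) =
      arccos (‖⟪v, w⟫_ℂ‖ / (‖v‖ * ‖w‖)) := by
  obtain ⟨s, hs⟩ := Projectivization.exists_smul_eq_mk_rep ℂ v hv
  obtain ⟨t, ht⟩ := Projectivization.exists_smul_eq_mk_rep ℂ w hw
  have hs₀ : ‖(s : ℂ)‖ ≠ 0 := by simp
  have ht₀ : ‖(t : ℂ)‖ ≠ 0 := by simp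
  rw [qAngle, ← hs, ← ht]
  simp only [Units.smul_def, inner_smul_left, inner_smul_right, norm_mul, norm_smul,
    Complex.norm_conj]
  congr 1
  field_simp

lemma mem_alphaSet_iff {ι : Type*} {α : ℝ} (hα₀ : 0 ≤ α) (hα₁ : α ≤ π) {u : ι → H}
    (hu : ∀ j, ‖u j‖ = 1) {x : ℙ ℂ H} :
    x ∈ alphaSet α {y | ∃ j, y.submodule = ℂ ∙ u j} ↔
      ∀ j, ‖⟪u j, x.rep⟫_ℂ‖ = cos α * ‖x.rep‖ := by
  have hu₀ : ∀ j, u j ≠ 0 := fun j => norm_ne_zero_iff.1 (by simp [hu j])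
  simp only [alphaSet, Set.mem_ofPred_eq, forall_exists_index,
    Projectivization.submodule_eq_span_singleton_iff (hu₀ _)]
  rw [forall_comm]
  simp only [forall_eq]
  refine forall_congr' fun j => ?_
  have hx : ‖x.rep‖ ≠ 0 := norm_ne_zero_iff.2 x.rep_nonzero
  have hcs : ‖⟪x.rep, u j⟫_ℂ‖ / ‖x.rep‖ ≤ 1 :=
    div_le_one_of_le₀ ((norm_inner_le_norm _ _).trans_eq (by rw [hu j, mul_one]))
      (norm_nonneg _)
  have hpos : 0 ≤ ‖⟪x.rep, u j⟫_ℂ‖ / ‖x.rep‖ := by positivity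
  conv_lhs => rw [← x.mk_rep, qAngle_mk_mk, hu j, mul_one]
  rw [Real.arccos_eq_iff_eq_cos (by linarith) hcs hα₀ hα₁, norm_inner_symm, div_eq_iff hx]

lemma norm_smul_add_sq {e h : H} (he : ‖e‖ = 1) (heh : ⟪e, h⟫_ℂ = 0) (ξ : ℂ) :
    ‖ξ • e + h‖ ^ 2 = ‖ξ‖ ^ 2 + ‖h‖ ^ 2 := by
  have := norm_add_sq_eq_norm_sq_add_norm_sq_of_inner_eq_zero (ξ • e) h
    (by rw [inner_smul_left, heh, mul_zero])
  rw [sq, sq, sq, this, norm_smul, he, mul_one]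

lemma setOf_span_smul_add_eq {e f : H} {r : ℝ} (he : ‖e‖ = 1) (hfe : ⟪f, e⟫_ℂ = 0)
    (hr₀ : 0 < r) (hr₁ : r ≤ 1) :
    {x : ℙ ℂ H | ∃ h : H, ‖h‖ = √(1 - r ^ 2) ∧ ⟪e, h⟫_ℂ = 0 ∧ ⟪f, h⟫_ℂ = 0 ∧
      x.submodule = ℂ ∙ ((r : ℂ) • e + h)} =
    {x | ⟪f, x.rep⟫_ℂ = 0 ∧ ‖⟪e, x.rep⟫_ℂ‖ = r * ‖x.rep‖} := by
  have hee : ⟪e, e⟫_ℂ = 1 := by rw [inner_self_eq_norm_sq_to_K, he]; norm_num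
  ext x
  simp only [Set.mem_ofPred_eq, x.submodule_eq]
  constructor
  · rintro ⟨h, hh, heh, hfh, hspan⟩
    obtain ⟨μ, hμ⟩ := Submodule.mem_span_singleton.1
      (hspan ▸ Submodule.mem_span_singleton_self x.rep)
    have hnorm : ‖(r : ℂ) • e + h‖ = 1 := by
      have := norm_smul_add_sq he heh r
      rw [hh, Complex.norm_real, Real.norm_eq_abs, sq_abs,
        sq_sqrt (by nlinarith), add_sub_cancel] at this
      exact (pow_eq_one_iff_of_nonneg (norm_nonneg _) two_ne_zero).1 this
    rw [← hμ, inner_smul_right, inner_smul_right, inner_add_right, inner_add_right,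
      inner_smul_right, inner_smul_right, hfe, hfh, hee, heh, norm_smul, hnorm]
    simp [abs_of_pos hr₀, mul_comm]
  · rintro ⟨hfv, hev⟩
    set v := x.rep
    have hev₀ : ⟪e, v⟫_ℂ ≠ 0 := by
      intro h0
      rw [h0, norm_zero] at hev
      exact (mul_pos hr₀ (norm_pos_iff.2 x.rep_nonzero)).ne hev
    set s : ℂ := r / ⟪e, v⟫_ℂ
    have hs : s ≠ 0 := div_ne_zero (by exact_mod_cast hr₀.ne') hev₀
    have hsv : ‖s • v‖ = 1 := by
      rw [norm_smul, norm_div, Complex.norm_real, Real.norm_eq_abs, abs_of_pos hr₀, hev]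
      field_simp
      exact div_self (norm_ne_zero_iff.2 x.rep_nonzero)
    have heh : ⟪e, s • v - (r : ℂ) • e⟫_ℂ = 0 := by
      rw [inner_sub_right, inner_smul_right, inner_smul_right, hee, div_mul_cancel₀ _ hev₀,
        mul_one, sub_self]
    refine ⟨s • v - (r : ℂ) • e, ?_, heh, ?_, ?_⟩
    · have := norm_smul_add_sq he heh r
      rw [add_sub_cancel, hsv, Complex.norm_real, Real.norm_eq_abs, sq_abs] at this
      rw [← sqrt_sq (norm_nonneg _)]
      congr 1
      linarith
    · rw [inner_sub_right, inner_smul_right, inner_smul_right, hfv, hfe, mul_zero, mul_zero,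
        sub_zero]
    · rw [add_sub_cancel, Submodule.span_singleton_smul_eq hs.isUnit]

lemma alphaSet_collinear_triple_eq {α : ℝ} (hα₀ : 0 ≤ α) (hα₁ : α ≤ π) {c d : ℝ}
    (hc : 0 < c) (hd : 0 < d) (hcd : c ^ 2 + d ^ 2 = 1) {lam : Fin 3 → ℂ}
    (hlam : ∀ j, ‖lam j‖ = 1) (hinj : Function.Injective lam) {e₁ e₂ : H}
    (he₁ : ‖e₁‖ = 1) (he₂ : ‖e₂‖ = 1) (he₁₂ : ⟪e₁, e₂⟫_ℂ = 0) :
    alphaSet α {x | ∃ j, x.submodule = ℂ ∙ ((c : ℂ) • e₁ + (lam j * d) • e₂)} =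
      {x | ⟪e₂, x.rep⟫_ℂ = 0 ∧ ‖⟪e₁, x.rep⟫_ℂ‖ = cos α / c * ‖x.rep‖} ∪
      {x | ⟪e₁, x.rep⟫_ℂ = 0 ∧ ‖⟪e₂, x.rep⟫_ℂ‖ = cos α / d * ‖x.rep‖} := by
  have hu : ∀ j, ‖(c : ℂ) • e₁ + (lam j * d) • e₂‖ = 1 := fun j => by
    have := norm_smul_add_sq he₁ (h := (lam j * d) • e₂)
      (by rw [inner_smul_right, he₁₂, mul_zero]) c
    rw [norm_smul, norm_mul, hlam j, he₂, Complex.norm_real, Complex.norm_real, norm_eq_abs,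
      norm_eq_abs, one_mul, mul_one, sq_abs, sq_abs, hcd] at this
    exact (pow_eq_one_iff_of_nonneg (norm_nonneg _) two_ne_zero).1 this
  ext x
  rw [mem_alphaSet_iff hα₀ hα₁ hu]
  have hinner : ∀ j, ⟪(c : ℂ) • e₁ + (lam j * d) • e₂, x.rep⟫_ℂ =
      c * ⟪e₁, x.rep⟫_ℂ + conj (lam j) * (d * ⟪e₂, x.rep⟫_ℂ) := fun j => by
    simp only [inner_add_left, inner_smul_left, map_mul, Complex.conj_ofReal]
    ring
  simp only [hinner, Set.mem_union, Set.mem_ofPred_eq]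
  constructor
  · intro h
    rcases eq_zero_or_eq_zero_of_norm_add_mul_eq (μ := fun j => conj (lam j)) (by simpa)
      ((RingHom.injective _).comp hinj) h with h₁ | h₂
    · have h₁ : ⟪e₁, x.rep⟫_ℂ = 0 := by simpa [hc.ne'] using h₁
      have := h 0
      simp only [h₁, mul_zero, zero_add, norm_mul, Complex.norm_conj, hlam, one_mul,
        Complex.norm_real, norm_eq_abs, abs_of_pos hd] at this
      exact Or.inr ⟨h₁, by field_simp; linarith⟩
    · have h₂ : ⟪e₂, x.rep⟫_ℂ = 0 := by simpa [hd.ne'] using h₂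
      have := h 0
      simp only [h₂, mul_zero, add_zero, norm_mul, Complex.norm_real, norm_eq_abs,
        abs_of_pos hc] at this
      exact Or.inl ⟨h₂, by field_simp; linarith⟩
  · rintro (⟨h₂, h₁⟩ | ⟨h₁, h₂⟩) j
    · rw [h₂, mul_zero, mul_zero, add_zero, norm_mul, h₁, Complex.norm_real, norm_eq_abs,
        abs_of_pos hc]
      field_simp
    · rw [h₁, mul_zero, zero_add, norm_mul, norm_mul, h₂, Complex.norm_conj, hlam, one_mul,
        Complex.norm_real, norm_eq_abs, abs_of_pos hd]
      field_simp

theorem alphaSet_of_collinear_triple_general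
    (α : ℝ) (hα₁ : Real.pi / 4 < α) (hα₂ : α < Real.pi / 2)
    (a : ℝ) (ha : a = Real.cos α)
    (c d : ℝ) (hdc : d ≤ c) (hd : 0 < d) (hcd : c ^ 2 + d ^ 2 = 1)
    (lam : Fin 3 → ℂ) (hlam : ∀ j, ‖lam j‖ = 1) (hinj : Function.Injective lam)
    (e₁ e₂ : H) (he₁ : ‖e₁‖ = 1) (he₂ : ‖e₂‖ = 1) (he₁₂ : (inner ℂ e₁ e₂ : ℂ) = 0)
    (S₀ : Set (Projectivization ℂ H))
    (hS₀ : S₀ = {x | ∃ j : Fin 3,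
      x.submodule = Submodule.span ℂ {(c : ℂ) • e₁ + (lam j * d) • e₂}}) :
    (d < a → alphaSet α S₀ =
      {x | ∃ h : H, ‖h‖ = Real.sqrt (1 - a ^ 2 / c ^ 2) ∧
        (inner ℂ e₁ h : ℂ) = 0 ∧ (inner ℂ e₂ h : ℂ) = 0 ∧
        x.submodule = Submodule.span ℂ {((a / c : ℝ) : ℂ) • e₁ + h}}) ∧
    (a ≤ d →
      alphaSet α S₀ =
        {x | ∃ h : H, ‖h‖ = Real.sqrt (1 - a ^ 2 / c ^ 2) ∧
          (inner ℂ e₁ h : ℂ) = 0 ∧ (inner ℂ e₂ h : ℂ) = 0 ∧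
          x.submodule = Submodule.span ℂ {((a / c : ℝ) : ℂ) • e₁ + h}} ∪
        {x | ∃ h : H, ‖h‖ = Real.sqrt (1 - a ^ 2 / d ^ 2) ∧
          (inner ℂ e₁ h : ℂ) = 0 ∧ (inner ℂ e₂ h : ℂ) = 0 ∧
          x.submodule = Submodule.span ℂ {((a / d : ℝ) : ℂ) • e₂ + h}} ∧
      Disjoint
        {x : Projectivization ℂ H | ∃ h : H, ‖h‖ = Real.sqrt (1 - a ^ 2 / c ^ 2) ∧
          (inner ℂ e₁ h : ℂ) = 0 ∧ (inner ℂ e₂ h : ℂ) = 0 ∧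
          x.submodule = Submodule.span ℂ {((a / c : ℝ) : ℂ) • e₁ + h}}
        {x : Projectivization ℂ H | ∃ h : H, ‖h‖ = Real.sqrt (1 - a ^ 2 / d ^ 2) ∧
          (inner ℂ e₁ h : ℂ) = 0 ∧ (inner ℂ e₂ h : ℂ) = 0 ∧
          x.submodule = Submodule.span ℂ {((a / d : ℝ) : ℂ) • e₂ + h}}) := by
  have ha₀ : 0 < a := ha ▸ cos_pos_of_mem_Ioo ⟨by linarith [pi_pos], hα₂⟩
  have hc : 0 < c := hd.trans_le hdc
  have hac : a < c := by
    have : a < √2 / 2 := ha ▸ cos_pi_div_four ▸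
      cos_lt_cos_of_nonneg_of_le_pi (by positivity) (by linarith [pi_pos]) hα₁
    nlinarith [sq_sqrt (show (0 : ℝ) ≤ 2 by norm_num)]
  subst hS₀
  rw [alphaSet_collinear_triple_eq (by linarith [pi_pos]) (by linarith [pi_pos]) hc hd hcd
    hlam hinj he₁ he₂ he₁₂, ← ha]
  simp_rw [← div_pow]
  rw [setOf_span_smul_add_eq he₁ (inner_eq_zero_symm.1 he₁₂) (div_pos ha₀ hc)
    ((div_le_one hc).2 hac.le)]
  refine ⟨fun hda => Set.union_eq_left.2 ?_, fun had => ?_⟩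
  · rintro x ⟨-, hx⟩
    have hcs := norm_inner_le_norm (𝕜 := ℂ) e₂ x.rep
    rw [he₂, one_mul, hx] at hcs
    have : a / d ≤ 1 := le_of_mul_le_mul_right (by rwa [one_mul]) (norm_pos_iff.2 x.rep_nonzero)
    linarith [(div_le_one hd).1 this]
  · simp_rw [and_left_comm (a := (inner ℂ e₁ _ : ℂ) = 0)]
    rw [setOf_span_smul_add_eq he₂ he₁₂ (div_pos ha₀ hd) ((div_le_one hd).2 had)]
    refine ⟨rfl, Set.disjoint_left.2 ?_⟩
    rintro x ⟨h₂, -⟩ ⟨-, h₂'⟩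
    rw [h₂, norm_zero] at h₂'
    exact (mul_pos (div_pos ha₀ hd) (norm_pos_iff.2 x.rep_nonzero)).ne h₂'

/-- the α-set of a collinear triple S₀. -/
theorem alphaSet_of_collinear_triple
    (hdim : 3 ≤ Module.rank ℂ H)
    (α : ℝ) (hα₁ : Real.pi / 4 < α) (hα₂ : α < Real.pi / 2)
    (a : ℝ) (ha : a = Real.cos α)
    (c d : ℝ) (hdc : d ≤ c) (hd : 0 < d) (hcd : c ^ 2 + d ^ 2 = 1)
    (lam : Fin 3 → ℂ) (hlam : ∀ j, ‖lam j‖ = 1) (hinj : Function.Injective lam)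
    (e₁ e₂ : H) (he₁ : ‖e₁‖ = 1) (he₂ : ‖e₂‖ = 1) (he₁₂ : (inner ℂ e₁ e₂ : ℂ) = 0)
    (S₀ : Set (Projectivization ℂ H))
    (hS₀ : S₀ = {x | ∃ j : Fin 3,
      x.submodule = Submodule.span ℂ {(c : ℂ) • e₁ + (lam j * d) • e₂}}) :
    (d < a → alphaSet α S₀ =
      {x | ∃ h : H, ‖h‖ = Real.sqrt (1 - a ^ 2 / c ^ 2) ∧
        (inner ℂ e₁ h : ℂ) = 0 ∧ (inner ℂ e₂ h : ℂ) = 0 ∧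
        x.submodule = Submodule.span ℂ {((a / c : ℝ) : ℂ) • e₁ + h}}) ∧
    (a ≤ d →
      alphaSet α S₀ =
        {x | ∃ h : H, ‖h‖ = Real.sqrt (1 - a ^ 2 / c ^ 2) ∧
          (inner ℂ e₁ h : ℂ) = 0 ∧ (inner ℂ e₂ h : ℂ) = 0 ∧
          x.submodule = Submodule.span ℂ {((a / c : ℝ) : ℂ) • e₁ + h}} ∪
        {x | ∃ h : H, ‖h‖ = Real.sqrt (1 - a ^ 2 / d ^ 2) ∧
          (inner ℂ e₁ h : ℂ) = 0 ∧ (inner ℂ e₂ h : ℂ) = 0 ∧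
          x.submodule = Submodule.span ℂ {((a / d : ℝ) : ℂ) • e₂ + h}} ∧
      Disjoint
        {x : Projectivization ℂ H | ∃ h : H, ‖h‖ = Real.sqrt (1 - a ^ 2 / c ^ 2) ∧
          (inner ℂ e₁ h : ℂ) = 0 ∧ (inner ℂ e₂ h : ℂ) = 0 ∧
          x.submodule = Submodule.span ℂ {((a / c : ℝ) : ℂ) • e₁ + h}}
        {x : Projectivization ℂ H | ∃ h : H, ‖h‖ = Real.sqrt (1 - a ^ 2 / d ^ 2) ∧
          (inner ℂ e₁ h : ℂ) = 0 ∧ (inner ℂ e₂ h : ℂ) = 0 ∧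
          x.submodule = Submodule.span ℂ {((a / d : ℝ) : ℂ) • e₂ + h}}) :=
  alphaSet_of_collinear_triple_general α hα₁ hα₂ a ha c d hdc hd hcd lam hlam hinj e₁ e₂ he₁ he₂
    he₁₂ S₀ hS₀
end
end

section
/- Let H be a complex Hilbert space with dim H ≥ 4 and fix π/4 < α < π/2. Then every circle in P(H) is highly-α-symmetric. -/
noncomputable section

variable {H : Type*} [NormedAddCommGroup H] [InnerProductSpace ℂ H]

/-!
Write the circle as `T = {[c e₁ + λ d e₂] : |λ| = 1}` and put `k = cos α`. For a vector `u`,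
`⟪u, c e₁ + λ d e₂⟫ = c ⟪u, e₁⟫ + λ d ⟪u, e₂⟫`, and `|A + λ B|` can only take the same value at
three distinct points of the unit circle if `A = 0` or `B = 0`. Hence the α-set of any three
points of `T`, and of `T` itself, is the union of the two cones
`{[u] : u ⊥ e₁, |⟪u, e₂⟫| = (k / d) ‖u‖}` and `{[u] : u ⊥ e₂, |⟪u, e₁⟫| = (k / c) ‖u‖}`.

Since `α > π / 4`, `2 k² < 1 = c² + d²`, so after swapping `e₁` and `e₂` we may assume `k < d`.
The first cone then contains the vectors `t λ e₂ + ρ s` with `t = k / d`, `t² + ρ² = 1`, `|λ| = 1`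
and `s` a unit vector orthogonal to `e₁, e₂`. If `[w]` makes angle `α` with all of them, taking
`s ⊥ w` (possible as `dim H ≥ 4`) gives `|⟪w, e₂⟫| = d ‖w‖`, and varying `λ` for a fixed `s`
gives `⟪w, s⟫ = 0`. So `w ∈ span {e₁, e₂}` with `|⟪w, e₂⟫| = d ‖w‖`, i.e. `[w] ∈ T`.
-/

open Projectivization Real Set
open scoped InnerProductSpace ComplexConjugate LinearAlgebra.Projectivization

lemma qAngle_comm (x y : ℙ ℂ H) : qAngle x y = qAngle y x := by
  rw [qAngle, qAngle, norm_inner_symm, mul_comm ‖x.rep‖]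

lemma alphaSet_anti {α : ℝ} {S S' : Set (ℙ ℂ H)} (h : S ⊆ S') :
    alphaSet α S' ⊆ alphaSet α S :=
  fun _ hx y hy => hx y (h hy)

lemma subset_alphaSet_symm {α : ℝ} {S T : Set (ℙ ℂ H)} (h : S ⊆ alphaSet α T) :
    T ⊆ alphaSet α S :=
  fun y hy x hx => (qAngle_comm y x).trans (h hx y hy)

lemma qAngle_mk (v w : H) (hv : v ≠ 0) (hw : w ≠ 0) :
    qAngle (mk ℂ v hv) (mk ℂ w hw) = Real.arccos (‖⟪v, w⟫_ℂ‖ / (‖v‖ * ‖w‖)) := by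
  obtain ⟨a, ha⟩ := exists_smul_eq_mk_rep ℂ v hv
  obtain ⟨b, hb⟩ := exists_smul_eq_mk_rep ℂ w hw
  have ha0 : ‖(a : ℂ)‖ ≠ 0 := norm_ne_zero_iff.mpr a.ne_zero
  have hb0 : ‖(b : ℂ)‖ ≠ 0 := norm_ne_zero_iff.mpr b.ne_zero
  rw [qAngle, ← ha, ← hb, Units.smul_def, Units.smul_def, inner_smul_left, inner_smul_right,
    norm_smul, norm_smul, norm_mul, norm_mul, RCLike.norm_conj]
  congr 1
  field_simp

lemma qAngle_mk_eq_iff {v w : H} (hv : v ≠ 0) (hw : w ≠ 0) {α : ℝ} (hα : α ∈ Icc 0 π) :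
    qAngle (mk ℂ v hv) (mk ℂ w hw) = α ↔ ‖⟪v, w⟫_ℂ‖ = cos α * (‖v‖ * ‖w‖) := by
  have hvw : 0 < ‖v‖ * ‖w‖ := by positivity
  have hmem : ‖⟪v, w⟫_ℂ‖ / (‖v‖ * ‖w‖) ∈ Icc (-1) 1 :=
    ⟨by linarith [div_nonneg (norm_nonneg ⟪v, w⟫_ℂ) hvw.le],
      div_le_one_of_le₀ (norm_inner_le_norm v w) hvw.le⟩
  rw [qAngle_mk, ← div_eq_iff hvw.ne']
  constructor
  · rintro rfl; exact (Real.cos_arccos hmem.1 hmem.2).symm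
  · intro h; rw [h, Real.arccos_cos hα.1 hα.2]

lemma mul_mul_eq_conj_of_re_mul_eq {W l l' : ℂ} (hl : ‖l‖ = 1) (hl' : ‖l'‖ = 1) (hne : l ≠ l')
    (h : (W * l).re = (W * l').re) : W * (l * l') = conj W := by
  have hE : W * l + conj W * conj l = W * l' + conj W * conj l' := by
    simpa only [← Complex.add_conj, map_mul] using congrArg (fun r : ℝ => ((2 * r : ℝ) : ℂ)) h
  have hll : l * conj l = 1 := by simp [Complex.mul_conj, Complex.normSq_eq_norm_sq, hl]
  have hll' : l' * conj l' = 1 := by simp [Complex.mul_conj, Complex.normSq_eq_norm_sq, hl']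
  have key : (l - l') * (W * (l * l') - conj W) = 0 := by
    linear_combination (l * l') * hE - conj W * l' * hll + conj W * l * hll'
  exact sub_eq_zero.mp ((mul_eq_zero.mp key).resolve_left (sub_ne_zero.mpr hne))

lemma eq_zero_of_re_mul_eq {W l₁ l₂ l₃ : ℂ} (hl₁ : ‖l₁‖ = 1) (hl₂ : ‖l₂‖ = 1) (hl₃ : ‖l₃‖ = 1)
    (h₁₂ : l₁ ≠ l₂) (h₁₃ : l₁ ≠ l₃) (h₂₃ : l₂ ≠ l₃)
    (hW₁₂ : (W * l₁).re = (W * l₂).re) (hW₁₃ : (W * l₁).re = (W * l₃).re) : W = 0 := by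
  have key : W * l₁ * (l₂ - l₃) = 0 := by
    linear_combination mul_mul_eq_conj_of_re_mul_eq hl₁ hl₂ h₁₂ hW₁₂ -
      mul_mul_eq_conj_of_re_mul_eq hl₁ hl₃ h₁₃ hW₁₃
  have hl₁0 : l₁ ≠ 0 := by rintro rfl; simp at hl₁
  simpa [hl₁0, sub_eq_zero, h₂₃] using key

lemma norm_add_mul_sq {A B l : ℂ} (hl : ‖l‖ = 1) :
    ‖A + l * B‖ ^ 2 = ‖A‖ ^ 2 + ‖B‖ ^ 2 + 2 * (B * conj A * l).re := by
  have hre : (A * conj (l * B)).re = (B * conj A * l).re := by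
    rw [← Complex.conj_re]; simp only [map_mul, Complex.conj_conj]; ring_nf
  rw [← Complex.normSq_eq_norm_sq, Complex.normSq_add, hre, Complex.normSq_mul,
    Complex.normSq_eq_norm_sq, Complex.normSq_eq_norm_sq, Complex.normSq_eq_norm_sq, hl]
  ring

lemma eq_zero_or_eq_zero_of_norm_add_mul_eq_s10 {A B l₁ l₂ l₃ : ℂ} {m : ℝ}
    (hl₁ : ‖l₁‖ = 1) (hl₂ : ‖l₂‖ = 1) (hl₃ : ‖l₃‖ = 1)
    (h₁₂ : l₁ ≠ l₂) (h₁₃ : l₁ ≠ l₃) (h₂₃ : l₂ ≠ l₃)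
    (hm₁ : ‖A + l₁ * B‖ = m) (hm₂ : ‖A + l₂ * B‖ = m) (hm₃ : ‖A + l₃ * B‖ = m) :
    A = 0 ∨ B = 0 := by
  have h₁ := norm_add_mul_sq (A := A) (B := B) hl₁
  have h₂ := norm_add_mul_sq (A := A) (B := B) hl₂
  have h₃ := norm_add_mul_sq (A := A) (B := B) hl₃
  rw [hm₁] at h₁; rw [hm₂] at h₂; rw [hm₃] at h₃
  have hW : B * conj A = 0 :=
    eq_zero_of_re_mul_eq hl₁ hl₂ hl₃ h₁₂ h₁₃ h₂₃ (by linarith) (by linarith)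
  simpa [or_comm] using hW

lemma norm_smul_add_smul_sq {𝕜 E : Type*} [RCLike 𝕜] [NormedAddCommGroup E]
    [InnerProductSpace 𝕜 E] {x y : E} (h : ⟪x, y⟫_𝕜 = 0) (a b : 𝕜) :
    ‖a • x + b • y‖ ^ 2 = ‖a‖ ^ 2 * ‖x‖ ^ 2 + ‖b‖ ^ 2 * ‖y‖ ^ 2 := by
  have h' : ⟪a • x, b • y⟫_𝕜 = 0 := by rw [inner_smul_left, inner_smul_right, h]; ring
  rw [sq, norm_add_sq_eq_norm_sq_add_norm_sq_of_inner_eq_zero _ _ h', norm_smul, norm_smul]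
  ring

lemma exists_norm_eq_one_mem_orthogonal_span {𝕜 E : Type*} [RCLike 𝕜] [NormedAddCommGroup E]
    [InnerProductSpace 𝕜 E] (s : Finset E) (hs : (s.card : Cardinal) < Module.rank 𝕜 E) :
    ∃ g ∈ (Submodule.span 𝕜 (s : Set E))ᗮ, ‖g‖ = 1 := by
  have := FiniteDimensional.span_finset 𝕜 s
  have hK : Submodule.span 𝕜 (s : Set E) ≠ ⊤ := fun h =>
    (rank_span_finset_le s).not_gt (by rwa [h, rank_top])
  obtain ⟨v, hv, hv0⟩ :=
    (Submodule.ne_bot_iff _).mp (mt Submodule.orthogonal_eq_bot_iff.mp hK)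
  exact ⟨(‖v‖⁻¹ : 𝕜) • v, Submodule.smul_mem _ _ hv, norm_smul_inv_norm hv0⟩

structure IsCircleFrame (e₁ e₂ : H) (c d : ℝ) : Prop where
  norm_e₁ : ‖e₁‖ = 1
  norm_e₂ : ‖e₂‖ = 1
  inner_e₁_e₂ : ⟪e₁, e₂⟫_ℂ = 0
  pos_c : 0 < c
  pos_d : 0 < d
  sq_add_sq : c ^ 2 + d ^ 2 = 1

def circleVec (e₁ e₂ : H) (c d : ℝ) (l : ℂ) : H := (c : ℂ) • e₁ + (l * d) • e₂

lemma inner_circleVec (u e₁ e₂ : H) (c d : ℝ) (l : ℂ) :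
    ⟪u, circleVec e₁ e₂ c d l⟫_ℂ = c * ⟪u, e₁⟫_ℂ + l * (d * ⟪u, e₂⟫_ℂ) := by
  rw [circleVec, inner_add_right, inner_smul_right, inner_smul_right]; ring

lemma circleSet_swap (e₁ e₂ : H) (c d : ℝ) : circleSet e₁ e₂ c d = circleSet e₂ e₁ d c := by
  suffices h : ∀ (e₁ e₂ : H) (c d : ℝ), circleSet e₁ e₂ c d ⊆ circleSet e₂ e₁ d c from
    (h e₁ e₂ c d).antisymm (h e₂ e₁ d c)
  rintro e₁ e₂ c d x ⟨l, hl, hx⟩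
  have hl0 : l ≠ 0 := by rintro rfl; simp at hl
  have hll : l * conj l = 1 := by simp [Complex.mul_conj, Complex.normSq_eq_norm_sq, hl]
  refine ⟨conj l, by rw [RCLike.norm_conj, hl], ?_⟩
  have hv : (c : ℂ) • e₁ + (l * d) • e₂ = l • ((d : ℂ) • e₂ + (conj l * c) • e₁) := by
    rw [smul_add, smul_smul, smul_smul, ← mul_assoc, hll, one_mul, add_comm]
  rw [hx, hv, Submodule.span_singleton_smul_eq (isUnit_iff_ne_zero.mpr hl0)]

lemma mem_circleSet_of_submodule_eq {e₁ e₂ : H} {c d : ℝ} (hc : 0 < c) (hd : 0 < d) {a b : ℂ}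
    (ha : a ≠ 0) (hab : ‖b‖ * c = ‖a‖ * d) {x : ℙ ℂ H}
    (hx : x.submodule = Submodule.span ℂ {a • e₁ + b • e₂}) : x ∈ circleSet e₁ e₂ c d := by
  have hcC : (c : ℂ) ≠ 0 := by exact_mod_cast hc.ne'
  have hdC : (d : ℂ) ≠ 0 := by exact_mod_cast hd.ne'
  refine ⟨c * b / (d * a), ?_, ?_⟩
  · rw [norm_div, norm_mul, norm_mul, Complex.norm_real, Complex.norm_real,
      Real.norm_of_nonneg hc.le, Real.norm_of_nonneg hd.le, mul_comm c, hab, mul_comm, div_self]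
    exact mul_ne_zero hd.ne' (norm_ne_zero_iff.mpr ha)
  · have hv : a • e₁ + b • e₂ = (a / c) • ((c : ℂ) • e₁ + (c * b / (d * a) * d) • e₂) := by
      rw [smul_add, smul_smul, smul_smul]
      congr 2 <;> field_simp
    rw [hx, hv, Submodule.span_singleton_smul_eq (isUnit_iff_ne_zero.mpr (div_ne_zero ha hcC))]

def coneSet (e f : H) (t : ℝ) : Set (ℙ ℂ H) :=
  {x | ∃ (u : H) (hu : u ≠ 0), x = mk ℂ u hu ∧ ⟪u, e⟫_ℂ = 0 ∧ ‖⟪u, f⟫_ℂ‖ = t * ‖u‖}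

lemma mk_mem_coneSet {e f u : H} (hu : u ≠ 0) {k d : ℝ} (hd : 0 < d) (he : ⟪u, e⟫_ℂ = 0)
    (hf : ‖d * ⟪u, f⟫_ℂ‖ = k * ‖u‖) : mk ℂ u hu ∈ coneSet e f (k / d) := by
  refine ⟨u, hu, rfl, he, ?_⟩
  rw [norm_mul, Complex.norm_real, Real.norm_of_nonneg hd.le] at hf
  field_simp
  linarith

lemma norm_inner_add_eq_of_mem_alphaSet_coneSet {e₁ e₂ : H} (he₂ : ‖e₂‖ = 1)
    (he₂₁ : ⟪e₂, e₁⟫_ℂ = 0) {t ρ : ℝ} (ht : 0 ≤ t) (htρ : t ^ 2 + ρ ^ 2 = 1) {α : ℝ}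
    (hα : α ∈ Icc 0 π) {x : ℙ ℂ H} (hx : x ∈ alphaSet α (coneSet e₁ e₂ t)) {s : H}
    (hs₁ : ⟪e₁, s⟫_ℂ = 0) (hs₂ : ⟪e₂, s⟫_ℂ = 0) (hs : ‖s‖ = 1) {θ : ℂ} (hθ : ‖θ‖ = 1) :
    ‖ρ * ⟪x.rep, s⟫_ℂ + θ * (t * ⟪x.rep, e₂⟫_ℂ)‖ = cos α * ‖x.rep‖ := by
  set u := (θ * t) • e₂ + (ρ : ℂ) • s
  have hu1 : ‖u‖ = 1 := by
    have : ‖u‖ ^ 2 = 1 := by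
      rw [norm_smul_add_smul_sq hs₂, norm_mul, hθ, he₂, hs, Complex.norm_real, Complex.norm_real,
        Real.norm_of_nonneg ht, Real.norm_eq_abs, sq_abs]
      linarith
    nlinarith [norm_nonneg u]
  have hu : u ≠ 0 := norm_ne_zero_iff.mp (by rw [hu1]; exact one_ne_zero)
  have hmem : mk ℂ u hu ∈ coneSet e₁ e₂ t := by
    refine ⟨u, hu, rfl, ?_, ?_⟩
    · rw [inner_add_left, inner_smul_left, inner_smul_left, he₂₁, ← inner_conj_symm, hs₁]; simp
    · rw [inner_add_left, inner_smul_left, inner_smul_left, ← inner_conj_symm s, hs₂,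
        inner_self_eq_norm_sq_to_K, he₂, hu1]
      simp [Real.norm_of_nonneg ht, hθ]
  have h := hx _ hmem
  rw [← mk_rep x, qAngle_mk_eq_iff _ _ hα, hu1, mul_one] at h
  rw [← h]
  congr 1
  rw [inner_add_right, inner_smul_right, inner_smul_right]
  ring

lemma norm_inner_eq_of_mem_alphaSet_coneSet (hdim : 4 ≤ Module.rank ℂ H) {e₁ e₂ : H}
    (he₂ : ‖e₂‖ = 1) (he₂₁ : ⟪e₂, e₁⟫_ℂ = 0) {t ρ : ℝ} (ht : 0 ≤ t) (htρ : t ^ 2 + ρ ^ 2 = 1)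
    {α : ℝ} (hα : α ∈ Icc 0 π) {x : ℙ ℂ H} (hx : x ∈ alphaSet α (coneSet e₁ e₂ t)) :
    t * ‖⟪x.rep, e₂⟫_ℂ‖ = cos α * ‖x.rep‖ := by
  classical
  obtain ⟨s, hs, hs1⟩ := exists_norm_eq_one_mem_orthogonal_span {e₁, e₂, x.rep}
    (lt_of_lt_of_le (by exact_mod_cast Finset.card_le_three.trans_lt (by norm_num)) hdim)
  have hs' {v : H} (hv : v ∈ ({e₁, e₂, x.rep} : Finset H)) : ⟪v, s⟫_ℂ = 0 :=
    Submodule.inner_right_of_mem_orthogonal (Submodule.subset_span hv) hs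
  have h := norm_inner_add_eq_of_mem_alphaSet_coneSet he₂ he₂₁ ht htρ hα hx
    (hs' (by simp)) (hs' (by simp)) hs1 (θ := 1) (by simp)
  rwa [hs' (by simp), mul_zero, zero_add, one_mul, norm_mul, Complex.norm_real,
    Real.norm_of_nonneg ht] at h

lemma rep_mem_span_of_mem_alphaSet_coneSet {e₁ e₂ : H} (he₂ : ‖e₂‖ = 1) (he₂₁ : ⟪e₂, e₁⟫_ℂ = 0)
    {t ρ : ℝ} (ht : 0 < t) (htρ : t ^ 2 + ρ ^ 2 = 1) (hρ : ρ ≠ 0) {α : ℝ} (hα : α ∈ Icc 0 π)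
    {x : ℙ ℂ H} (hx : x ∈ alphaSet α (coneSet e₁ e₂ t)) (hq : ⟪x.rep, e₂⟫_ℂ ≠ 0) :
    x.rep ∈ Submodule.span ℂ {e₁, e₂} := by
  have := FiniteDimensional.span_of_finite ℂ (toFinite ({e₁, e₂} : Set H))
  rw [← Submodule.orthogonal_orthogonal (Submodule.span ℂ {e₁, e₂}), Submodule.mem_orthogonal]
  intro s hs
  rcases eq_or_ne s 0 with rfl | hs0
  · exact inner_zero_left _
  have hs' : (‖s‖ : ℂ)⁻¹ • s ∈ (Submodule.span ℂ {e₁, e₂})ᗮ := Submodule.smul_mem _ _ hs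
  have h {θ : ℂ} (hθ : ‖θ‖ = 1) := norm_inner_add_eq_of_mem_alphaSet_coneSet he₂ he₂₁ ht.le htρ hα
    hx (Submodule.inner_right_of_mem_orthogonal (Submodule.subset_span (by simp)) hs')
    (Submodule.inner_right_of_mem_orthogonal (Submodule.subset_span (by simp)) hs')
    (norm_smul_inv_norm hs0) hθ
  rcases eq_zero_or_eq_zero_of_norm_add_mul_eq_s10 (l₁ := 1) (l₂ := -1) (l₃ := Complex.I)
    (by simp) (by simp) (by simp) (by norm_num) (by simp [Complex.ext_iff])
    (by simp [Complex.ext_iff]) (h (by simp)) (h (by simp)) (h (by simp)) with h0 | h0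
  · simpa [inner_smul_right, hρ, hs0, inner_eq_zero_symm] using h0
  · exact absurd h0 (mul_ne_zero (by exact_mod_cast ht.ne') hq)

namespace IsCircleFrame

variable {e₁ e₂ : H} {c d : ℝ}

lemma symm (hF : IsCircleFrame e₁ e₂ c d) : IsCircleFrame e₂ e₁ d c where
  norm_e₁ := hF.norm_e₂
  norm_e₂ := hF.norm_e₁
  inner_e₁_e₂ := by rw [← inner_conj_symm, hF.inner_e₁_e₂, map_zero]
  pos_c := hF.pos_d
  pos_d := hF.pos_c
  sq_add_sq := by linarith [hF.sq_add_sq]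

lemma inner_e₂_e₁ (hF : IsCircleFrame e₁ e₂ c d) : ⟪e₂, e₁⟫_ℂ = 0 := hF.symm.inner_e₁_e₂

lemma inner_self_e₁ (hF : IsCircleFrame e₁ e₂ c d) : ⟪e₁, e₁⟫_ℂ = 1 := by
  rw [inner_self_eq_norm_sq_to_K, hF.norm_e₁]; norm_num

lemma inner_self_e₂ (hF : IsCircleFrame e₁ e₂ c d) : ⟪e₂, e₂⟫_ℂ = 1 := hF.symm.inner_self_e₁

lemma norm_circleVec (hF : IsCircleFrame e₁ e₂ c d) {l : ℂ} (hl : ‖l‖ = 1) :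
    ‖circleVec e₁ e₂ c d l‖ = 1 := by
  have h : ‖circleVec e₁ e₂ c d l‖ ^ 2 = 1 := by
    rw [circleVec, norm_smul_add_smul_sq hF.inner_e₁_e₂, norm_mul, hl, hF.norm_e₁, hF.norm_e₂,
      Complex.norm_real, Complex.norm_real, Real.norm_eq_abs, Real.norm_eq_abs]
    simpa using hF.sq_add_sq
  nlinarith [norm_nonneg (circleVec e₁ e₂ c d l)]

lemma circleVec_ne_zero (hF : IsCircleFrame e₁ e₂ c d) {l : ℂ} (hl : ‖l‖ = 1) :
    circleVec e₁ e₂ c d l ≠ 0 :=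
  norm_ne_zero_iff.mp (by rw [hF.norm_circleVec hl]; exact one_ne_zero)

lemma mem_circleSet_iff (hF : IsCircleFrame e₁ e₂ c d) {x : ℙ ℂ H} :
    x ∈ circleSet e₁ e₂ c d ↔
      ∃ (l : ℂ) (hl : ‖l‖ = 1),
        x = Projectivization.mk ℂ (circleVec e₁ e₂ c d l) (hF.circleVec_ne_zero hl) := by
  constructor
  · rintro ⟨l, hl, hx⟩
    exact ⟨l, hl, submodule_injective (by rw [hx, submodule_mk]; rfl)⟩
  · rintro ⟨l, hl, rfl⟩
    exact ⟨l, hl, submodule_mk _ _⟩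

lemma mk_circleVec_injective (hF : IsCircleFrame e₁ e₂ c d) {l l' : ℂ} (hl : ‖l‖ = 1)
    (hl' : ‖l'‖ = 1)
    (h : Projectivization.mk ℂ _ (hF.circleVec_ne_zero hl) =
      Projectivization.mk ℂ _ (hF.circleVec_ne_zero hl')) : l = l' := by
  obtain ⟨a, ha⟩ := (mk_eq_mk_iff ℂ _ _ _ _).mp h
  have hc : (c : ℂ) ≠ 0 := by exact_mod_cast hF.pos_c.ne'
  have hd : (d : ℂ) ≠ 0 := by exact_mod_cast hF.pos_d.ne'
  have inner_e₁ : ∀ l, ⟪e₁, circleVec e₁ e₂ c d l⟫_ℂ = c := fun l => by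
    rw [inner_circleVec, hF.inner_self_e₁, hF.inner_e₁_e₂]; ring
  have inner_e₂ : ∀ l, ⟪e₂, circleVec e₁ e₂ c d l⟫_ℂ = l * d := fun l => by
    rw [inner_circleVec, hF.inner_self_e₂, hF.inner_e₂_e₁]; ring
  have ha1 : (a : ℂ) = 1 := by
    have := congrArg (⟪e₁, ·⟫_ℂ) ha
    simp only [Units.smul_def, inner_smul_right, inner_e₁] at this
    exact mul_right_cancel₀ hc (this.trans (one_mul _).symm)
  rw [Units.smul_def, ha1, one_smul] at ha
  simpa [inner_e₂, hd] using congrArg (⟪e₂, ·⟫_ℂ) ha.symm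

lemma circleSet_infinite (hF : IsCircleFrame e₁ e₂ c d) : (circleSet e₁ e₂ c d).Infinite := by
  have hexp (θ : ℝ) : ‖Complex.exp (θ * Complex.I)‖ = 1 := Complex.norm_exp_ofReal_mul_I θ
  refine Set.infinite_of_injOn_mapsTo (s := Ioo 0 π)
    (f := fun θ => Projectivization.mk ℂ _ (hF.circleVec_ne_zero (hexp θ)))
    (fun θ hθ θ' hθ' h => injOn_cos (Ioo_subset_Icc_self hθ) (Ioo_subset_Icc_self hθ') ?_)
    (fun θ _ => hF.mem_circleSet_iff.mpr ⟨_, hexp θ, rfl⟩) (Ioo_infinite pi_pos)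
  simpa only [Complex.exp_ofReal_mul_I_re] using
    congrArg Complex.re (hF.mk_circleVec_injective (hexp θ) (hexp θ') h)

lemma qAngle_mk_circleVec_eq_iff (hF : IsCircleFrame e₁ e₂ c d) {u : H} (hu : u ≠ 0) {l : ℂ}
    (hl : ‖l‖ = 1) {α : ℝ} (hα : α ∈ Icc 0 π) :
    qAngle (Projectivization.mk ℂ u hu) (Projectivization.mk ℂ _ (hF.circleVec_ne_zero hl)) = α ↔
      ‖c * ⟪u, e₁⟫_ℂ + l * (d * ⟪u, e₂⟫_ℂ)‖ = cos α * ‖u‖ := by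
  rw [qAngle_mk_eq_iff hu _ hα, hF.norm_circleVec hl, mul_one, inner_circleVec]

lemma coneSet_subset_alphaSet (hF : IsCircleFrame e₁ e₂ c d) {α : ℝ} (hα : α ∈ Icc 0 π) :
    coneSet e₁ e₂ (cos α / d) ⊆ alphaSet α (circleSet e₁ e₂ c d) := by
  rintro _ ⟨u, hu, rfl, hue₁, hue₂⟩ y hy
  obtain ⟨l, hl, rfl⟩ := hF.mem_circleSet_iff.mp hy
  rw [hF.qAngle_mk_circleVec_eq_iff hu hl hα, hue₁, mul_zero, zero_add, norm_mul, norm_mul, hl,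
    one_mul, Complex.norm_real, Real.norm_of_nonneg hF.pos_d.le, hue₂]
  field_simp [hF.pos_d.ne']

lemma union_coneSet_subset_alphaSet (hF : IsCircleFrame e₁ e₂ c d) {α : ℝ} (hα : α ∈ Icc 0 π) :
    coneSet e₁ e₂ (cos α / d) ∪ coneSet e₂ e₁ (cos α / c) ⊆ alphaSet α (circleSet e₁ e₂ c d) :=
  union_subset (hF.coneSet_subset_alphaSet hα)
    (circleSet_swap e₁ e₂ c d ▸ hF.symm.coneSet_subset_alphaSet hα)

lemma alphaSet_triple_subset_union_coneSet (hF : IsCircleFrame e₁ e₂ c d) {α : ℝ} (hα : α ∈ Icc 0 π)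
    {x₁ x₂ x₃ : ℙ ℂ H} (hx₁ : x₁ ∈ circleSet e₁ e₂ c d) (hx₂ : x₂ ∈ circleSet e₁ e₂ c d)
    (hx₃ : x₃ ∈ circleSet e₁ e₂ c d) (h₁₂ : x₁ ≠ x₂) (h₁₃ : x₁ ≠ x₃) (h₂₃ : x₂ ≠ x₃) :
    alphaSet α {x₁, x₂, x₃} ⊆ coneSet e₁ e₂ (cos α / d) ∪ coneSet e₂ e₁ (cos α / c) := by
  obtain ⟨l₁, hl₁, rfl⟩ := hF.mem_circleSet_iff.mp hx₁
  obtain ⟨l₂, hl₂, rfl⟩ := hF.mem_circleSet_iff.mp hx₂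
  obtain ⟨l₃, hl₃, rfl⟩ := hF.mem_circleSet_iff.mp hx₃
  intro y hy
  rw [← mk_rep y] at hy ⊢
  have hm₁ := (hF.qAngle_mk_circleVec_eq_iff _ hl₁ hα).mp (hy _ (by simp))
  have hm₂ := (hF.qAngle_mk_circleVec_eq_iff _ hl₂ hα).mp (hy _ (by simp))
  have hm₃ := (hF.qAngle_mk_circleVec_eq_iff _ hl₃ hα).mp (hy _ (by simp))
  have ne {l l' : ℂ} (hl : ‖l‖ = 1) (hl' : ‖l'‖ = 1)
      (h : Projectivization.mk ℂ _ (hF.circleVec_ne_zero hl) ≠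
        Projectivization.mk ℂ _ (hF.circleVec_ne_zero hl')) : l ≠ l' := by
    rintro rfl; exact h rfl
  rcases eq_zero_or_eq_zero_of_norm_add_mul_eq_s10 hl₁ hl₂ hl₃ (ne hl₁ hl₂ h₁₂) (ne hl₁ hl₃ h₁₃)
    (ne hl₂ hl₃ h₂₃) hm₁ hm₂ hm₃ with h | h
  · have h₁ : ⟪y.rep, e₁⟫_ℂ = 0 := by simpa [hF.pos_c.ne'] using h
    rw [h, zero_add, norm_mul, hl₁, one_mul] at hm₁
    exact Or.inl (mk_mem_coneSet _ hF.pos_d h₁ hm₁)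
  · have h₂ : ⟪y.rep, e₂⟫_ℂ = 0 := by simpa [hF.pos_d.ne'] using h
    rw [h, mul_zero, add_zero] at hm₁
    exact Or.inr (mk_mem_coneSet _ hF.pos_c h₂ hm₁)

lemma alphaSet_eq_union_coneSet (hF : IsCircleFrame e₁ e₂ c d) {α : ℝ} (hα : α ∈ Icc 0 π)
    {S : Set (ℙ ℂ H)} (hS : S ⊆ circleSet e₁ e₂ c d) (h3 : S.ncard = 3) :
    alphaSet α S = coneSet e₁ e₂ (cos α / d) ∪ coneSet e₂ e₁ (cos α / c) := by
  obtain ⟨x₁, x₂, x₃, h₁₂, h₁₃, h₂₃, rfl⟩ := ncard_eq_three.mp h3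
  exact (hF.alphaSet_triple_subset_union_coneSet hα (hS (by simp)) (hS (by simp)) (hS (by simp))
    h₁₂ h₁₃ h₂₃).antisymm ((hF.union_coneSet_subset_alphaSet hα).trans (alphaSet_anti hS))

lemma mem_circleSet_of_rep_eq (hF : IsCircleFrame e₁ e₂ c d) {x : ℙ ℂ H} {a b : ℂ}
    (hx : x.rep = a • e₁ + b • e₂) (hb : ‖⟪x.rep, e₂⟫_ℂ‖ = d * ‖x.rep‖) :
    x ∈ circleSet e₁ e₂ c d := by
  have hw : 0 < ‖x.rep‖ := norm_pos_iff.mpr x.rep_nonzero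
  have hb' : ‖b‖ = d * ‖x.rep‖ := by
    have : ⟪x.rep, e₂⟫_ℂ = conj b := by
      rw [hx, inner_add_left, inner_smul_left, inner_smul_left, hF.inner_e₁_e₂, hF.inner_self_e₂]
      ring
    rwa [this, RCLike.norm_conj] at hb
  have hsq : ‖x.rep‖ ^ 2 = ‖a‖ ^ 2 + ‖b‖ ^ 2 := by
    rw [hx, norm_smul_add_smul_sq hF.inner_e₁_e₂, hF.norm_e₁, hF.norm_e₂]; ring
  have ha : ‖a‖ = c * ‖x.rep‖ := by
    have : ‖a‖ ^ 2 = (c * ‖x.rep‖) ^ 2 := by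
      linear_combination (-1 : ℝ) * hsq - (‖b‖ + d * ‖x.rep‖) * hb' - ‖x.rep‖ ^ 2 * hF.sq_add_sq
    exact (pow_left_inj₀ (norm_nonneg a) (mul_pos hF.pos_c hw).le two_ne_zero).mp this
  have ha0 : a ≠ 0 := norm_pos_iff.mp (by rw [ha]; exact mul_pos hF.pos_c hw)
  refine mem_circleSet_of_submodule_eq (b := b) hF.pos_c hF.pos_d ha0 (by rw [ha, hb']; ring) ?_
  rw [submodule_eq, hx]

lemma alphaSet_coneSet_subset_circleSet (hF : IsCircleFrame e₁ e₂ c d)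
    (hdim : 4 ≤ Module.rank ℂ H) {α : ℝ} (hα : α ∈ Icc 0 π) (hk : 0 < cos α) (hkd : cos α < d) :
    alphaSet α (coneSet e₁ e₂ (cos α / d)) ⊆ circleSet e₁ e₂ c d := by
  intro x hx
  have ht₀ : 0 < cos α / d := div_pos hk hF.pos_d
  have ht₁ : cos α / d < 1 := (div_lt_one hF.pos_d).mpr hkd
  have htρ : (cos α / d) ^ 2 + √(1 - (cos α / d) ^ 2) ^ 2 = 1 := by
    rw [Real.sq_sqrt (by nlinarith)]; ring
  have hρ : √(1 - (cos α / d) ^ 2) ≠ 0 := (Real.sqrt_pos.mpr (by nlinarith)).ne'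
  have hq : ‖⟪x.rep, e₂⟫_ℂ‖ = d * ‖x.rep‖ := by
    have h := norm_inner_eq_of_mem_alphaSet_coneSet hdim hF.norm_e₂ hF.inner_e₂_e₁ ht₀.le htρ hα hx
    rw [div_mul_eq_mul_div, div_eq_iff hF.pos_d.ne'] at h
    exact mul_left_cancel₀ hk.ne' (by linarith)
  have hq0 : ⟪x.rep, e₂⟫_ℂ ≠ 0 :=
    norm_pos_iff.mp (by rw [hq]; exact mul_pos hF.pos_d (norm_pos_iff.mpr x.rep_nonzero))
  obtain ⟨a, b, hab⟩ := Submodule.mem_span_pair.mp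
    (rep_mem_span_of_mem_alphaSet_coneSet hF.norm_e₂ hF.inner_e₂_e₁ ht₀ htρ hρ hα hx hq0)
  exact hF.mem_circleSet_of_rep_eq hab.symm hq

end IsCircleFrame

lemma coneSet_infinite (hdim : 3 ≤ Module.rank ℂ H) {e f : H} (hf : ‖f‖ = 1)
    (hef : ⟪e, f⟫_ℂ = 0) {t : ℝ} (ht₀ : 0 < t) (ht₁ : t < 1) : (coneSet e f t).Infinite := by
  classical
  obtain ⟨g, hg, hg1⟩ := exists_norm_eq_one_mem_orthogonal_span {e, f} (by
    refine lt_of_lt_of_le ?_ hdim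
    exact_mod_cast Finset.card_le_two.trans_lt (by norm_num))
  have hg' {v : H} (hv : v ∈ ({e, f} : Finset H)) : ⟪v, g⟫_ℂ = 0 :=
    Submodule.inner_right_of_mem_orthogonal (Submodule.subset_span hv) hg
  have hge : ⟪e, g⟫_ℂ = 0 := hg' (by simp)
  have hgf : ⟪f, g⟫_ℂ = 0 := hg' (by simp)
  set ρ := √(1 - t ^ 2)
  have hF : IsCircleFrame f g t ρ :=
    ⟨hf, hg1, hgf, ht₀, Real.sqrt_pos.mpr (by nlinarith), by rw [Real.sq_sqrt (by nlinarith)]; ring⟩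
  refine hF.circleSet_infinite.mono fun x hx => ?_
  obtain ⟨l, hl, rfl⟩ := hF.mem_circleSet_iff.mp hx
  refine ⟨_, _, rfl, ?_, ?_⟩
  · rw [← inner_conj_symm, inner_circleVec, hef, hge]; simp
  · rw [norm_inner_symm, inner_circleVec, hF.inner_self_e₁, hgf, hF.norm_circleVec hl]
    simp [Real.norm_of_nonneg ht₀.le]

lemma IsCircleFrame.isHighlyAlphaSymmetric {e₁ e₂ : H} {c d : ℝ} (hF : IsCircleFrame e₁ e₂ c d)
    (hdim : 4 ≤ Module.rank ℂ H) {α : ℝ} (hα : α ∈ Icc 0 π) (hk : 0 < cos α) (hkd : cos α < d) :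
    IsHighlyAlphaSymmetric α (circleSet e₁ e₂ c d) := by
  have hcone := hF.union_coneSet_subset_alphaSet hα
  refine ⟨hF.circleSet_infinite, ?_, fun S hS h3 => ?_⟩
  · exact (coneSet_infinite (le_trans (by norm_num) hdim) hF.norm_e₂ hF.inner_e₁_e₂
      (div_pos hk hF.pos_d) ((div_lt_one hF.pos_d).mpr hkd)).mono (subset_union_left.trans hcone)
  · rw [hF.alphaSet_eq_union_coneSet hα hS h3]
    exact ((alphaSet_anti subset_union_left).trans
      (hF.alphaSet_coneSet_subset_circleSet hdim hα hk hkd)).antisymm (subset_alphaSet_symm hcone)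

/-- every circle is highly-α-symmetric, dim ≥ 4. -/
theorem circle_is_highly_alpha_symmetric
    (hdim : 4 ≤ Module.rank ℂ H)
    (α : ℝ) (hα₁ : Real.pi / 4 < α) (hα₂ : α < Real.pi / 2)
    (T : Set (Projectivization ℂ H)) (hT : IsCircle T) :
    IsHighlyAlphaSymmetric α T := by
  obtain ⟨e₁, e₂, c, d, he₁, he₂, he₁₂, hc, hd, hcd, rfl⟩ := hT
  have hF : IsCircleFrame e₁ e₂ c d := ⟨he₁, he₂, he₁₂, hc, hd, hcd⟩
  have hα : α ∈ Icc 0 π := ⟨by linarith [pi_pos], by linarith [pi_pos]⟩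
  have hk : 0 < cos α := cos_pos_of_mem_Ioo ⟨by linarith [pi_pos], hα₂⟩
  have hk2 : 2 * cos α ^ 2 < 1 := by
    have h := cos_lt_cos_of_nonneg_of_le_pi (by positivity) hα.2 hα₁
    rw [cos_pi_div_four] at h
    nlinarith [Real.sq_sqrt (show (0 : ℝ) ≤ 2 by norm_num)]
  rcases lt_or_ge (cos α) d with hkd | hdk
  · exact hF.isHighlyAlphaSymmetric hdim hα hk hkd
  · rw [circleSet_swap]
    exact hF.symm.isHighlyAlphaSymmetric hdim hα hk (by nlinarith)
end
end
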